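/- Let λ > 0, N > T. For positive semidefinite M ∈ ℝ^{T×T}, define δ(M) ≥ 0 as the fixed point of δ = (1/N)Tr((M/(1+δ)+λI)⁻¹M), A(M) := M(λI + M/(1+δ(M)))⁻¹, and α(M) := Tr(A(M)²) / (N (1+δ(M))²). Then 0 ≤ α(M) ≤ T/N < 1, and consequently 1/(1 − α(M)) ≤ N/(N − T). -/

import Mathlib

open Matrix

lemma psd_trace_nonneg {n : ℕ} {P : Matrix (Fin n) (Fin n) ℝ} (hP : P.PosSemidef) :
    0 ≤ P.trace := by
  have h : ∀ i, 0 ≤ P i i := fun i => by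
    have := hP.dotProduct_mulVec_nonneg (Pi.single i 1)
    simpa [dotProduct, Pi.single_apply, mulVec, Finset.sum_ite_eq] using this
  exact Finset.sum_nonneg fun i _ => h i

lemma psd_smul {n : ℕ} {P : Matrix (Fin n) (Fin n) ℝ} (hP : P.PosSemidef)
    {c : ℝ} (hc : 0 ≤ c) : (c • P).PosSemidef := by
  refine Matrix.PosSemidef.of_dotProduct_mulVec_nonneg ?_ (fun x => ?_)
  · unfold Matrix.IsHermitian at *
    rw [conjTranspose_smul, hP.1]
    simp
  · rw [smul_mulVec, dotProduct_smul]
    exact mul_nonneg hc (hP.dotProduct_mulVec_nonneg x)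

/-- Uniform bound on the variance-inflation factor: with `δ` the nonnegative
fixed point, `A = M(λI + M/(1+δ))⁻¹` and `α = Tr(A²)/(N(1+δ)²)`, one has
`0 ≤ α ≤ T/N < 1` and `1/(1−α) ≤ N/(N−T)`. -/
theorem alpha_bound
    (T N : ℕ) (hTN : T < N) (lam : ℝ) (hlam : 0 < lam)
    (M : Matrix (Fin T) (Fin T) ℝ) (hM : M.PosSemidef)
    (δ : ℝ) (hδ : 0 ≤ δ)
    (hfix : δ = (N : ℝ)⁻¹ *
      ((((1 + δ)⁻¹ • M + lam • (1 : Matrix (Fin T) (Fin T) ℝ))⁻¹ * M).trace))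
    (A : Matrix (Fin T) (Fin T) ℝ)
    (hA : A = M * (lam • (1 : Matrix (Fin T) (Fin T) ℝ) + (1 + δ)⁻¹ • M)⁻¹)
    (α : ℝ) (hα : α = (A * A).trace / ((N : ℝ) * (1 + δ) ^ 2)) :
    0 ≤ α ∧ α ≤ (T : ℝ) / N ∧ (T : ℝ) / N < 1 ∧
      1 / (1 - α) ≤ (N : ℝ) / ((N : ℝ) - T) := by
  have h1δ : (0:ℝ) < 1 + δ := by linarith
  set B : Matrix (Fin T) (Fin T) ℝ := lam • (1 : Matrix (Fin T) (Fin T) ℝ) + (1 + δ)⁻¹ • M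
    with hB
  -- B is positive definite
  have hlam1 : (lam • (1 : Matrix (Fin T) (Fin T) ℝ)).PosDef := by
    rw [smul_one_eq_diagonal]
    exact Matrix.PosDef.diagonal fun _ => hlam
  have hBpd : B.PosDef := hlam1.add_posSemidef (psd_smul hM (by positivity))
  have hBdet : IsUnit B.det := hBpd.isUnit.map (Matrix.detMonoidHom)
  have hBB : B * B⁻¹ = 1 := Matrix.mul_nonsing_inv _ hBdet
  have hBB' : B⁻¹ * B = 1 := Matrix.nonsing_inv_mul _ hBdet
  -- commutation
  have hMB : M * B = B * M := by
    simp only [hB, Matrix.mul_add, Matrix.add_mul, Matrix.mul_smul, Matrix.smul_mul,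
      Matrix.mul_one, Matrix.one_mul]
  have hMBinv : M * B⁻¹ = B⁻¹ * M := by
    calc M * B⁻¹ = (B⁻¹ * B) * (M * B⁻¹) := by rw [hBB', Matrix.one_mul]
    _ = B⁻¹ * (B * M) * B⁻¹ := by simp only [Matrix.mul_assoc]
    _ = B⁻¹ * (M * B) * B⁻¹ := by rw [hMB]
    _ = (B⁻¹ * M) * (B * B⁻¹) := by simp only [Matrix.mul_assoc]
    _ = B⁻¹ * M := by rw [hBB, Matrix.mul_one]
  -- key identity: (1+δ)•1 - A = ((1+δ)*lam) • B⁻¹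
  have hBsymm : B⁻¹ᴴ = B⁻¹ := hBpd.inv.isHermitian
  have hkey : (1 + δ) • (1 : Matrix (Fin T) (Fin T) ℝ) - A = ((1 + δ) * lam) • B⁻¹ := by
    have h1 : (1 + δ) • B - M = ((1 + δ) * lam) • (1 : Matrix (Fin T) (Fin T) ℝ) := by
      rw [hB, smul_add, smul_smul, smul_smul, mul_inv_cancel₀ h1δ.ne', one_smul]
      abel
    calc (1 + δ) • (1 : Matrix (Fin T) (Fin T) ℝ) - A
        = ((1 + δ) • B - M) * B⁻¹ := by
          rw [Matrix.sub_mul, Matrix.smul_mul, hBB, hA]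
    _ = ((1 + δ) * lam) • B⁻¹ := by rw [h1, Matrix.smul_mul, Matrix.one_mul]
  -- trace (A * A) is nonnegative
  have hAsymm : Aᴴ = A := by
    rw [hA, conjTranspose_mul, hBsymm, hM.1, hMBinv]
  have htrAA : 0 ≤ (A * A).trace := by
    have := psd_trace_nonneg (posSemidef_conjTranspose_mul_self A)
    rwa [hAsymm] at this
  -- trace (A * A) ≤ T * (1+δ)^2
  have hprod : ((1 + δ) • (1 : Matrix (Fin T) (Fin T) ℝ) - A) *
      ((1 + δ) • (1 : Matrix (Fin T) (Fin T) ℝ) + A)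
      = ((1 + δ)^2) • (1 : Matrix (Fin T) (Fin T) ℝ) - A * A := by
    simp only [Matrix.sub_mul, Matrix.mul_add, Matrix.add_mul, Matrix.smul_mul,
      Matrix.mul_smul, Matrix.one_mul, Matrix.mul_one, smul_smul, ← sq]
    module
  have hpsd2 : (((1 + δ)^2) • (1 : Matrix (Fin T) (Fin T) ℝ) - A * A).PosSemidef := by
    rw [← hprod, hkey, Matrix.smul_mul, Matrix.mul_add, Matrix.mul_smul, Matrix.mul_one, hA,
      ← Matrix.mul_assoc]
    refine psd_smul (Matrix.PosSemidef.add (psd_smul hBpd.inv.posSemidef h1δ.le) ?_)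
      (by positivity)
    have := hM.mul_mul_conjTranspose_same B⁻¹
    rwa [hBsymm] at this
  have htr2 : (A * A).trace ≤ (T : ℝ) * (1 + δ)^2 := by
    have h := psd_trace_nonneg hpsd2
    rw [trace_sub, trace_smul, trace_one] at h
    simp only [smul_eq_mul, Finset.card_univ, Fintype.card_fin] at h
    nlinarith
  -- arithmetic
  have hN : (0:ℝ) < N := by exact_mod_cast Nat.zero_lt_of_lt hTN
  have hTNr : (T : ℝ) < N := by exact_mod_cast hTN
  have hden : (0:ℝ) < (N : ℝ) * (1 + δ)^2 := by positivity
  have hα0 : 0 ≤ α := by rw [hα]; exact div_nonneg htrAA hden.le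
  have hαle : α ≤ (T : ℝ) / N := by
    rw [hα, div_le_div_iff₀ hden hN]
    nlinarith
  have hTN1 : (T : ℝ) / N < 1 := (div_lt_one hN).2 hTNr
  refine ⟨hα0, hαle, hTN1, ?_⟩
  have h1 : 0 < 1 - (T : ℝ) / N := by linarith
  have h2 : 1 - (T : ℝ) / N ≤ 1 - α := by linarith
  calc 1 / (1 - α) ≤ 1 / (1 - (T : ℝ) / N) := one_div_le_one_div_of_le h1 h2
  _ = (N : ℝ) / ((N : ℝ) - T) := by
    have hNT : 1 - (T:ℝ)/N = ((N:ℝ) - T)/N := by field_simp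
    rw [hNT, one_div, inv_div]
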